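/- The map f ↦ (i(f), e(f)) is an isometry from (X, d) onto X', where X' = {(s, f) ∈ ℝ × C(ℝ : M) : f(t) = f(s) for all t ≤ s}; consequently (X, d) is a complete separable metric space and X' is a closed subset of ℝ × C(ℝ : M). -/

import Mathlib

open Set Filter

noncomputable section

variable (M : Type*) [MetricSpace M]

/-- The space `X = ⋃ₛ C([s,∞) : M)` of continuous paths with arbitrary starting times. -/
def PathX : Type _ := Σ s : ℝ, C(Set.Ici s, M)

variable {M}

/-- Starting time `i(f)` of a path. -/
def istart (f : PathX M) : ℝ := f.1

/-- The continuous extension `e(f) ∈ C(ℝ : M)`, `e(f)(t) = f(i(f) ∨ t)`. -/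
def pext (f : PathX M) : C(ℝ, M) :=
  f.2.comp ⟨fun t => (⟨max f.1 t, Set.mem_Ici.mpr (le_max_left _ _)⟩ : Set.Ici f.1),
    Continuous.subtype_mk (continuous_const.max continuous_id) fun t => le_max_left f.1 t⟩

variable (M)

/-- A distance `δ` on `C(ℝ : M)` for the topology of uniform convergence on compact
subsets of `ℝ`. -/
def deltaDist (f g : C(ℝ, M)) : ℝ :=
  ∑' n : ℕ, (1 / 2 : ℝ) ^ n *
    min 1 (⨆ t : Set.Icc (-(n : ℝ)) (n : ℝ), dist (f t) (g t))

/-- The distance `d₁` on `ℝ × C(ℝ : M)`. -/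
def dOne (p q : ℝ × C(ℝ, M)) : ℝ := |p.1 - q.1| + deltaDist M p.2 q.2

/-- The distance `d` on `X`: `d(f,g) = |i(f) − i(g)| + δ(e(f), e(g))`. -/
def dPath (f g : PathX M) : ℝ := |istart f - istart g| + deltaDist M (pext f) (pext g)

/-- The subset `X' = {(s,f) : f(t) = f(s) for all t ≤ s}` of `ℝ × C(ℝ : M)`. -/
def XPrime : Set (ℝ × C(ℝ, M)) := {p | ∀ t ≤ p.1, p.2 t = p.2 p.1}

/-! The series `δ` generates the uniformity of compact convergence on `C(ℝ, M)`: its `n`-th term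
is small exactly when `f` and `g` are uniformly close on `[-n, n]`, and the terms beyond `N` add
up to at most `2⁻ᴺ`. Hence the balls `{d₁ < ε}` form a basis of the product uniformity on
`ℝ × C(ℝ, M)`, which is complete, resp. second countable, when `M` is. Since evaluation
`(f, t) ↦ f t` is jointly continuous, `X'` is closed, and `f ↦ (i(f), e(f))` is an isometry onto
`X'` by the very definition of `d`, so `(X, d)` inherits completeness and separability. -/

open scoped Uniformity Topology

theorem Filter.HasBasis.tendsto_nhds_iff_tendsto_zero {α ι : Type*} [UniformSpace α]
    {d : α → α → ℝ} (hd : (𝓤 α).HasBasis (fun ε : ℝ => 0 < ε) fun ε => {p | d p.1 p.2 < ε})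
    (hd0 : ∀ x y, 0 ≤ d x y) {l : Filter ι} {F : ι → α} {x : α} :
    Tendsto F l (𝓝 x) ↔ Tendsto (fun i => d (F i) x) l (𝓝 0) := by
  rw [(nhds_basis_uniformity hd).tendsto_right_iff, Metric.tendsto_nhds]
  simp only [Real.dist_eq, sub_zero, abs_of_nonneg (hd0 _ _), mem_ofPred_eq]

theorem Filter.HasBasis.uniformity_prod_add {α β : Type*} [UniformSpace α] [UniformSpace β]
    {d₁ : α → α → ℝ} {d₂ : β → β → ℝ}
    (h₁ : (𝓤 α).HasBasis (fun ε : ℝ => 0 < ε) fun ε => {p | d₁ p.1 p.2 < ε})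
    (h₂ : (𝓤 β).HasBasis (fun ε : ℝ => 0 < ε) fun ε => {p | d₂ p.1 p.2 < ε})
    (hd₁ : ∀ x y, 0 ≤ d₁ x y) (hd₂ : ∀ x y, 0 ≤ d₂ x y) :
    (𝓤 (α × β)).HasBasis (fun ε : ℝ => 0 < ε)
      fun ε => {p | d₁ p.1.1 p.2.1 + d₂ p.1.2 p.2.2 < ε} := by
  refine (h₁.uniformity_prod h₂).to_hasBasis (fun ε hε => ?_) fun ε hε => ?_
  · refine ⟨min ε.1 ε.2, lt_min hε.1 hε.2, fun p hp => mem_entourageProd.2 ⟨?_, ?_⟩⟩ <;>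
    · simp only [mem_ofPred_eq, lt_min_iff] at hp ⊢
      linarith [hd₁ p.1.1 p.2.1, hd₂ p.1.2 p.2.2]
  · refine ⟨(ε / 2, ε / 2), ⟨half_pos hε, half_pos hε⟩, fun p hp => ?_⟩
    simp only [mem_entourageProd, mem_ofPred_eq] at hp ⊢
    linarith

theorem IsCompact.exists_nat_subset_Icc {K : Set ℝ} (hK : IsCompact K) :
    ∃ N : ℕ, K ⊆ Icc (-(N : ℝ)) N := by
  obtain ⟨r, hr⟩ := hK.isBounded.subset_closedBall 0
  refine ⟨⌈r⌉₊, fun x hx => abs_le.1 ?_⟩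
  exact (Real.norm_eq_abs x ▸ mem_closedBall_zero_iff.1 (hr hx)).trans (Nat.le_ceil r)

section

variable {M}

def supDistIcc (N : ℕ) (f g : C(ℝ, M)) : ℝ :=
  ⨆ t : Icc (-(N : ℝ)) N, dist (f t) (g t)

theorem dist_le_supDistIcc {N : ℕ} {t : ℝ} (ht : t ∈ Icc (-(N : ℝ)) N) (f g : C(ℝ, M)) :
    dist (f t) (g t) ≤ supDistIcc N f g := by
  have hbdd := (isCompact_Icc (a := -(N : ℝ)) (b := N)).bddAbove_image
    (f.continuous.dist g.continuous).continuousOn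
  rw [image_eq_range] at hbdd
  exact le_ciSup hbdd ⟨t, ht⟩

theorem supDistIcc_le {N : ℕ} {C : ℝ} {f g : C(ℝ, M)}
    (h : ∀ t ∈ Icc (-(N : ℝ)) N, dist (f t) (g t) ≤ C) : supDistIcc N f g ≤ C :=
  have : Nonempty (Icc (-(N : ℝ)) N) := ⟨⟨0, by simp⟩⟩
  ciSup_le fun t => h t t.2

theorem deltaDist_term_nonneg (n : ℕ) (f g : C(ℝ, M)) :
    0 ≤ (1 / 2 : ℝ) ^ n * min 1 (supDistIcc n f g) :=
  mul_nonneg (by positivity) (le_min zero_le_one (Real.iSup_nonneg fun _ => dist_nonneg))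

theorem summable_deltaDist (f g : C(ℝ, M)) :
    Summable fun n : ℕ => (1 / 2 : ℝ) ^ n * min 1 (supDistIcc n f g) :=
  summable_geometric_two.of_nonneg_of_le
    (fun n => deltaDist_term_nonneg n f g)
    (fun n => mul_le_of_le_one_right (by positivity) (min_le_left _ _))

theorem deltaDist_nonneg (f g : C(ℝ, M)) : 0 ≤ deltaDist M f g :=
  tsum_nonneg fun n => deltaDist_term_nonneg n f g

theorem dist_lt_of_deltaDist_lt {N : ℕ} {ε t : ℝ} {f g : C(ℝ, M)} (hε : ε ≤ 1)
    (h : deltaDist M f g < (1 / 2 : ℝ) ^ N * ε) (ht : t ∈ Icc (-(N : ℝ)) N) :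
    dist (f t) (g t) < ε := by
  have hterm : (1 / 2 : ℝ) ^ N * min 1 (supDistIcc N f g) ≤ deltaDist M f g :=
    (summable_deltaDist f g).le_tsum N fun n _ => deltaDist_term_nonneg n f g
  have hmin : min 1 (supDistIcc N f g) < ε :=
    lt_of_mul_lt_mul_left (hterm.trans_lt h) (by positivity)
  exact (dist_le_supDistIcc ht f g).trans_lt ((min_lt_iff.1 hmin).resolve_left hε.not_gt)

/-- The terms with `n ≤ N` add up to at most `2η`, the tail beyond `N` to at most `2⁻ᴺ`. -/
theorem deltaDist_le_of_forall_dist_le {N : ℕ} {η : ℝ} {f g : C(ℝ, M)}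
    (h : ∀ t ∈ Icc (-(N : ℝ)) N, dist (f t) (g t) ≤ η) :
    deltaDist M f g ≤ 2 * η + (1 / 2 : ℝ) ^ N := by
  have hη : 0 ≤ η := dist_nonneg.trans (h 0 (by simp))
  have htail : Summable fun n : ℕ => ite (N + 1 ≤ n) ((1 / 2 : ℝ) ^ n) 0 :=
    summable_geometric_two.of_nonneg_of_le (fun n => by positivity)
      (fun n => by split_ifs <;> simp)
  have hterm : ∀ n : ℕ, (1 / 2 : ℝ) ^ n * min 1 (supDistIcc n f g)
      ≤ (1 / 2 : ℝ) ^ n * η + ite (N + 1 ≤ n) ((1 / 2 : ℝ) ^ n) 0 := by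
    intro n
    split_ifs with hn
    · exact (mul_le_of_le_one_right (by positivity) (min_le_left _ _)).trans
        (le_add_of_nonneg_left (by positivity))
    · have hnN : (n : ℝ) ≤ N := by exact_mod_cast Nat.lt_succ_iff.1 (not_le.1 hn)
      rw [add_zero]
      gcongr
      exact (min_le_right _ _).trans <| supDistIcc_le fun t ht =>
        h t ⟨(neg_le_neg hnN).trans ht.1, ht.2.trans hnN⟩
  calc deltaDist M f g
      ≤ ∑' n : ℕ, ((1 / 2 : ℝ) ^ n * η + ite (N + 1 ≤ n) ((1 / 2 : ℝ) ^ n) 0) :=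
        (summable_deltaDist f g).tsum_le_tsum hterm
          ((summable_geometric_two.mul_right η).add htail)
    _ = 2 * η + (1 / 2 : ℝ) ^ N := by
        rw [(summable_geometric_two.mul_right η).tsum_add htail, tsum_mul_right,
          tsum_geometric_two]
        simp only [one_div, tsum_geometric_inv_two_ge, pow_succ]
        ring

theorem hasBasis_uniformity_deltaDist :
    (𝓤 C(ℝ, M)).HasBasis (fun ε : ℝ => 0 < ε) fun ε => {p | deltaDist M p.1 p.2 < ε} := by
  refine ContinuousMap.hasBasis_compactConvergenceUniformity.to_hasBasis' ?_ ?_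
  · rintro ⟨K, V⟩ ⟨hK, hV⟩
    obtain ⟨N, hKN⟩ := hK.exists_nat_subset_Icc
    obtain ⟨ε, hε, hεV⟩ := Metric.mem_uniformity_dist.1 hV
    refine ⟨(1 / 2 : ℝ) ^ N * min ε 1, by positivity, fun p hp x hx => hεV ?_⟩
    exact (dist_lt_of_deltaDist_lt (min_le_right _ _) hp (hKN hx)).trans_le (min_le_left _ _)
  · intro ε hε
    obtain ⟨N, hN⟩ := exists_pow_lt_of_lt_one (half_pos hε) (by norm_num : (1 / 2 : ℝ) < 1)
    refine mem_of_superset (ContinuousMap.hasBasis_compactConvergenceUniformity.mem_of_mem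
      (i := (Icc (-(N : ℝ)) N, {p | dist p.1 p.2 < ε / 4}))
      ⟨isCompact_Icc, Metric.dist_mem_uniformity (by positivity)⟩) fun p hp => ?_
    have := deltaDist_le_of_forall_dist_le fun t ht => (hp t ht).le
    simp only [mem_ofPred_eq] at this ⊢
    linarith

theorem dOne_nonneg (p q : ℝ × C(ℝ, M)) : 0 ≤ dOne M p q :=
  add_nonneg (abs_nonneg _) (deltaDist_nonneg _ _)

theorem hasBasis_uniformity_dOne :
    (𝓤 (ℝ × C(ℝ, M))).HasBasis (fun ε : ℝ => 0 < ε) fun ε => {p | dOne M p.1 p.2 < ε} :=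
  Filter.HasBasis.uniformity_prod_add (d₁ := fun a b => |a - b|)
    Metric.uniformity_basis_dist
    hasBasis_uniformity_deltaDist (fun _ _ => abs_nonneg _) deltaDist_nonneg

theorem isClosed_XPrime : IsClosed (XPrime M) := by
  have hXPrime : XPrime M = ⋂ t : ℝ, {p : ℝ × C(ℝ, M) | p.2 (min t p.1) = p.2 p.1} := by
    ext p
    simp only [XPrime, mem_iInter, mem_ofPred_eq]
    exact ⟨fun hp t => hp _ (min_le_right _ _), fun hp t ht => min_eq_left ht ▸ hp t⟩
  rw [hXPrime]
  exact isClosed_iInter fun t => isClosed_eq (by fun_prop) (by fun_prop)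

namespace PathX

def toProd (f : PathX M) : ℝ × C(ℝ, M) := (istart f, pext f)

def ofFun (s : ℝ) (g : C(ℝ, M)) : PathX M := ⟨s, g.restrict (Ici s)⟩

theorem pext_apply_of_le (f : PathX M) {t : ℝ} (ht : f.1 ≤ t) : pext f t = f.2 ⟨t, ht⟩ :=
  congrArg f.2 (Subtype.ext (max_eq_right ht))

theorem pext_apply_of_ge (f : PathX M) {t : ℝ} (ht : t ≤ f.1) :
    pext f t = f.2 ⟨f.1, mem_Ici.2 le_rfl⟩ :=
  congrArg f.2 (Subtype.ext (max_eq_left ht))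

theorem toProd_mem_XPrime (f : PathX M) : toProd f ∈ XPrime M := fun _ ht =>
  (pext_apply_of_ge f ht).trans (pext_apply_of_ge f le_rfl).symm

theorem toProd_ofFun {p : ℝ × C(ℝ, M)} (hp : p ∈ XPrime M) : toProd (ofFun p.1 p.2) = p := by
  refine Prod.ext rfl (ContinuousMap.ext fun t => ?_)
  rcases le_total p.1 t with ht | ht
  · exact congrArg p.2 (max_eq_right ht)
  · exact (congrArg p.2 (max_eq_left ht)).trans (hp t ht).symm

theorem injective_toProd : Function.Injective (toProd : PathX M → ℝ × C(ℝ, M)) := by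
  rintro ⟨s, φ⟩ ⟨s', ψ⟩ h
  obtain ⟨rfl : s = s', hext⟩ := Prod.mk.inj h
  congr 1
  ext ⟨t, ht⟩
  exact (pext_apply_of_le ⟨s, φ⟩ ht).symm.trans
    ((DFunLike.congr_fun hext t).trans (pext_apply_of_le ⟨s, ψ⟩ ht))

theorem range_toProd : range (toProd : PathX M → ℝ × C(ℝ, M)) = XPrime M :=
  Subset.antisymm (range_subset_iff.2 toProd_mem_XPrime) fun _ hp => ⟨_, toProd_ofFun hp⟩

theorem exists_tendsto_of_cauchy [CompleteSpace M] {u : ℕ → PathX M}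
    (hu : ∀ ε : ℝ, 0 < ε → ∃ N, ∀ m ≥ N, ∀ n ≥ N, dPath M (u m) (u n) < ε) :
    ∃ f : PathX M, Tendsto (fun n => dPath M (u n) f) atTop (𝓝 0) := by
  obtain ⟨q, hq⟩ := cauchySeq_tendsto_of_complete
    (hasBasis_uniformity_dOne.cauchySeq_iff.2 hu : CauchySeq (toProd ∘ u))
  have hqX : q ∈ XPrime M :=
    isClosed_XPrime.mem_of_tendsto hq (Eventually.of_forall fun n => toProd_mem_XPrime (u n))
  obtain ⟨f, rfl⟩ := range_toProd.symm.subset hqX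
  exact ⟨f, (hasBasis_uniformity_dOne.tendsto_nhds_iff_tendsto_zero dOne_nonneg).1 hq⟩

theorem exists_countable_dense [TopologicalSpace.SeparableSpace M] :
    ∃ D : Set (PathX M), D.Countable ∧
      ∀ f : PathX M, ∀ ε : ℝ, 0 < ε → ∃ g ∈ D, dPath M f g < ε := by
  have := UniformSpace.secondCountable_of_separable M
  obtain ⟨S, hS, hSdense⟩ := TopologicalSpace.exists_countable_dense (XPrime M)
  refine ⟨toProd ⁻¹' (Subtype.val '' S), (hS.image _).preimage injective_toProd,
    fun f ε hε => ?_⟩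
  have hball : {p | dOne M (toProd f) p < ε} ∈ 𝓝 (toProd f) :=
    (nhds_basis_uniformity' hasBasis_uniformity_dOne).mem_of_mem hε
  obtain ⟨⟨p, hpX⟩, hpS, hpball⟩ := hSdense.inter_nhds_nonempty
    ((continuous_subtype_val.continuousAt (x := ⟨_, toProd_mem_XPrime f⟩)).preimage_mem_nhds
      hball)
  refine ⟨ofFun p.1 p.2, ?_, ?_⟩
  · rw [mem_preimage, toProd_ofFun hpX]
    exact ⟨_, hpS, rfl⟩
  · change dOne M (toProd f) (toProd (ofFun p.1 p.2)) < ε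
    rwa [toProd_ofFun hpX]

end PathX

end

theorem pathX_isometry_onto_XPrime :
    -- (a) the map is an isometry:
    (∀ f g : PathX M, dPath M f g = dOne M (istart f, pext f) (istart g, pext g)) ∧
    -- (b) it is a bijection from `X` onto `X'`:
    Function.Injective (fun f : PathX M => (istart f, pext f)) ∧
    Set.range (fun f : PathX M => (istart f, pext f)) = XPrime M ∧
    -- (c) `X'` is closed in `(ℝ × C(ℝ : M), d₁)` (sequentially, w.r.t. `d₁`):
    (∀ (p : ℕ → ℝ × C(ℝ, M)) (q : ℝ × C(ℝ, M)), (∀ n, p n ∈ XPrime M) →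
      Tendsto (fun n => dOne M (p n) q) atTop (nhds 0) → q ∈ XPrime M) ∧
    -- (d) if `M` is complete, then `(X, d)` is complete:
    (CompleteSpace M →
      ∀ u : ℕ → PathX M,
        (∀ ε : ℝ, 0 < ε → ∃ N, ∀ m ≥ N, ∀ n ≥ N, dPath M (u m) (u n) < ε) →
        ∃ f : PathX M, Tendsto (fun n => dPath M (u n) f) atTop (nhds 0)) ∧
    -- (e) if `M` is separable, then `(X, d)` is separable:
    (TopologicalSpace.SeparableSpace M →
      ∃ D : Set (PathX M), D.Countable ∧
        ∀ f : PathX M, ∀ ε : ℝ, 0 < ε → ∃ g ∈ D, dPath M f g < ε) := by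
  refine ⟨fun f g => rfl, PathX.injective_toProd, PathX.range_toProd,
    fun p q hp hpq => ?_, fun _ _ => PathX.exists_tendsto_of_cauchy,
    fun _ => PathX.exists_countable_dense⟩
  exact isClosed_XPrime.mem_of_tendsto
    ((hasBasis_uniformity_dOne.tendsto_nhds_iff_tendsto_zero dOne_nonneg).2 hpq)
    (Eventually.of_forall hp)
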